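/- Solution of the Bellman equation for the (d,k)-runlength-limited input-constrained BEC (core of Theorem 9): Fix integers 0 ≤ d < k < ∞ and ε ∈ [0,1], and define ρ_ε := (1−ε) · max over (a_d, …, a_{k−1}) ∈ [0,1]^{k−d} of [ Σ_{i=d}^{k−1} h_b(a_i) · Π_{j=d}^{i−1} (1−a_j) ] / [ d + 1 + Σ_{i=d}^{k−1} Π_{j=d}^{i} (1−a_j) ], where an empty product equals 1. Then there exists a function h : {0, 1, …, k} → ℝ such that (i) ρ_ε + h(i) = h(i+1) for all 0 ≤ i ≤ d−1, (ii) ρ_ε + h(i) = max_{a ∈ [0,1]} [ (1−ε)·h_b(a) + (1−a)·h(i+1) + a·h(0) ] for all d ≤ i ≤ k−1, and (iii) ρ_ε = h(0) − h(k). -/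

import Mathlib

/-!
Read `a i` as the probability of sending a `1` (and returning to state `0`) in state `i`.
Value iteration `V₀ = -ρ`, `Vₙ₊₁ = max_a [c h_b(a) + (1 - a) Vₙ] - ρ` computes, for each state
`i ≥ d`, the largest gain `c · (expected reward) - ρ · (expected duration)` of the excursion from
`i` back to `0`; the maximum is attained by the greedy policy. At `i = d` this gain is
`c · N - ρ · D` with `N / (d + D)` the ratio maximised by `m`, so `ρ = c m` makes its maximum
exactly `d ρ`. Hence `h i = i ρ` for `i ≤ d` and `h i = V_{k-i}` for `i ≥ d` agree at `d`.
-/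

open Finset

/-- The binary entropy function (base 2); the convention `0 · log₂ 0 = 0` is
automatic since `Real.logb 2 0 = 0`. -/
noncomputable def binEnt (x : ℝ) : ℝ :=
  -(x * Real.logb 2 x) - (1 - x) * Real.logb 2 (1 - x)

@[fun_prop]
lemma continuous_binEnt : Continuous binEnt := by
  have h : binEnt = fun x => Real.binEntropy x / Real.log 2 := by
    funext x
    simp only [binEnt, Real.binEntropy, Real.logb, Real.log_inv]
    ring
  rw [h]
  exact Real.binEntropy_continuous.div_const _

noncomputable def bellmanMax (c x : ℝ) : ℝ :=
  sSup ((fun a => c * binEnt a + (1 - a) * x) '' Set.Icc 0 1)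

lemma isGreatest_bellmanMax (c x : ℝ) :
    IsGreatest ((fun a => c * binEnt a + (1 - a) * x) '' Set.Icc 0 1) (bellmanMax c x) :=
  (isCompact_Icc.image (by fun_prop)).isGreatest_sSup ((Set.nonempty_Icc.2 zero_le_one).image _)

section Excursion

variable (k : ℕ) (a : ℕ → ℝ)

noncomputable def tailReward (i : ℕ) : ℝ :=
  ∑ l ∈ Ico i k, binEnt (a l) * ∏ j ∈ Ico i l, (1 - a j)

noncomputable def tailLength (i : ℕ) : ℝ :=
  1 + ∑ l ∈ Ico i k, ∏ j ∈ Ico i (l + 1), (1 - a j)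

noncomputable def gain (c ρ : ℝ) (i : ℕ) : ℝ :=
  c * tailReward k a i - ρ * tailLength k a i

variable {k}

lemma tailReward_of_lt {i : ℕ} (hi : i < k) :
    tailReward k a i = binEnt (a i) + (1 - a i) * tailReward k a (i + 1) := by
  rw [tailReward, sum_eq_sum_Ico_succ_bot hi, Ico_self, prod_empty, mul_one, tailReward, mul_sum]
  congr 1
  refine sum_congr rfl fun l hl => ?_
  rw [prod_eq_prod_Ico_succ_bot (Nat.lt_of_succ_le (mem_Ico.1 hl).1)]
  ring

lemma tailLength_of_lt {i : ℕ} (hi : i < k) :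
    tailLength k a i = 1 + (1 - a i) * tailLength k a (i + 1) := by
  have hprod : ∀ l ∈ Ico i k, ∏ j ∈ Ico i (l + 1), (1 - a j)
      = (1 - a i) * ∏ j ∈ Ico (i + 1) (l + 1), (1 - a j) := fun l hl =>
    prod_eq_prod_Ico_succ_bot (Nat.lt_succ_of_le (mem_Ico.1 hl).1) _
  rw [tailLength, sum_congr rfl hprod, ← mul_sum, sum_eq_sum_Ico_succ_bot hi, Ico_self,
    prod_empty, tailLength]

variable (c ρ : ℝ)

lemma gain_self : gain k a c ρ k = -ρ := by
  simp [gain, tailReward, tailLength]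

lemma gain_of_lt {i : ℕ} (hi : i < k) :
    gain k a c ρ i = c * binEnt (a i) + (1 - a i) * gain k a c ρ (i + 1) - ρ := by
  rw [gain, gain, tailReward_of_lt a hi, tailLength_of_lt a hi]
  ring

end Excursion

noncomputable def valueIter (c ρ : ℝ) : ℕ → ℝ
  | 0 => -ρ
  | n + 1 => bellmanMax c (valueIter c ρ n) - ρ

section ValueIteration

variable {k : ℕ} (c ρ : ℝ)

lemma gain_le_valueIter {a : ℕ → ℝ} (ha : ∀ j, a j ∈ Set.Icc (0 : ℝ) 1) {i : ℕ} (hi : i ≤ k) :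
    gain k a c ρ i ≤ valueIter c ρ (k - i) := by
  induction hi using Nat.decreasingInduction with
  | self => simp [gain_self, valueIter]
  | of_succ i hik ih =>
    rw [gain_of_lt a c ρ hik, show k - i = k - (i + 1) + 1 by omega, valueIter]
    have hmax := (isGreatest_bellmanMax c (valueIter c ρ (k - (i + 1)))).2 ⟨a i, ha i, rfl⟩
    have hstep := mul_le_mul_of_nonneg_left ih (sub_nonneg.2 (ha i).2)
    simp only at hmax
    linarith

lemma exists_gain_eq_valueIter :
    ∃ a : ℕ → ℝ, (∀ j, a j ∈ Set.Icc (0 : ℝ) 1) ∧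
      ∀ i ≤ k, gain k a c ρ i = valueIter c ρ (k - i) := by
  choose g hg_mem hg_eq using fun x => (isGreatest_bellmanMax c x).1
  refine ⟨fun i => g (valueIter c ρ (k - (i + 1))), fun j => hg_mem _, fun i hi => ?_⟩
  induction hi using Nat.decreasingInduction with
  | self => simp [gain_self, valueIter]
  | of_succ i hik ih =>
    rw [gain_of_lt _ c ρ hik, ih, show k - i = k - (i + 1) + 1 by omega, valueIter,
      ← hg_eq]

lemma isGreatest_valueIter {i : ℕ} (hi : i ≤ k) :
    IsGreatest ((fun a => gain k a c ρ i) '' {a : ℕ → ℝ | ∀ j, a j ∈ Set.Icc (0 : ℝ) 1})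
      (valueIter c ρ (k - i)) := by
  obtain ⟨b, hb, hb_eq⟩ := exists_gain_eq_valueIter (k := k) c ρ
  exact ⟨⟨b, hb, hb_eq i hi⟩, by rintro _ ⟨a, ha, rfl⟩; exact gain_le_valueIter c ρ ha hi⟩

end ValueIteration

lemma isGreatest_gain_of_isGreatest_ratio {d k : ℕ} {c m ρ : ℝ} (hc : 0 ≤ c)
    (hm : IsGreatest
      ((fun a : ℕ → ℝ =>
          (∑ i ∈ Ico d k, binEnt (a i) * ∏ j ∈ Ico d i, (1 - a j)) /
            ((d : ℝ) + 1 + ∑ i ∈ Ico d k, ∏ j ∈ Ico d (i + 1), (1 - a j))) ''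
        {a : ℕ → ℝ | ∀ i, a i ∈ Set.Icc (0 : ℝ) 1}) m)
    (hρ : ρ = c * m) :
    IsGreatest ((fun a => gain k a c ρ d) '' {a : ℕ → ℝ | ∀ j, a j ∈ Set.Icc (0 : ℝ) 1})
      (d * ρ) := by
  have hlen_pos : ∀ a : ℕ → ℝ, (∀ j, a j ∈ Set.Icc (0 : ℝ) 1) →
      0 < (d : ℝ) + 1 + ∑ i ∈ Ico d k, ∏ j ∈ Ico d (i + 1), (1 - a j) := fun a ha => by
    have := sum_nonneg fun i (_ : i ∈ Ico d k) =>
      prod_nonneg fun j (_ : j ∈ Ico d (i + 1)) => sub_nonneg.2 (ha j).2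
    positivity
  have hgain : ∀ a : ℕ → ℝ, gain k a c ρ d = d * ρ + c * (tailReward k a d -
      m * ((d : ℝ) + 1 + ∑ i ∈ Ico d k, ∏ j ∈ Ico d (i + 1), (1 - a j))) := fun a => by
    rw [gain, tailLength, hρ]
    ring
  refine ⟨?_, ?_⟩
  · obtain ⟨a, ha, ha_eq⟩ := hm.1
    refine ⟨a, ha, ?_⟩
    dsimp only
    rw [hgain, ← (div_eq_iff (hlen_pos a ha).ne').1 ha_eq, tailReward, sub_self, mul_zero, add_zero]
  · rintro _ ⟨a, ha, rfl⟩
    have hle := (div_le_iff₀ (hlen_pos a ha)).1 (hm.2 ⟨a, ha, rfl⟩)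
    have := mul_nonpos_of_nonneg_of_nonpos hc (sub_nonpos.2 hle)
    dsimp only
    rw [hgain]
    exact add_le_of_nonpos_right this

/-- **Solution of the Bellman equation for the (d,k)-RLL input-constrained BEC**
(core of Theorem 9 of the paper). With
`ρ_ε = (1−ε) · max_{a_d,…,a_{k−1} ∈ [0,1]} [Σ_{i=d}^{k−1} h_b(a_i) Π_{j=d}^{i−1}(1−a_j)]
        / [d + 1 + Σ_{i=d}^{k−1} Π_{j=d}^{i}(1−a_j)]`,
there is a function `h : {0,…,k} → ℝ` with `ρ_ε + h(i) = h(i+1)` for `0 ≤ i ≤ d−1`,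
`ρ_ε + h(i) = max_{a ∈ [0,1]} [(1−ε)h_b(a) + (1−a)h(i+1) + a·h(0)]` for
`d ≤ i ≤ k−1`, and `ρ_ε = h(0) − h(k)`. -/
theorem bellman_dk_BEC (d k : ℕ) (hdk : d < k) (ε : ℝ) (hε : ε ∈ Set.Icc (0 : ℝ) 1)
    (m ρ : ℝ)
    (hm : IsGreatest
      ((fun a : ℕ → ℝ =>
          (∑ i ∈ Finset.Ico d k, binEnt (a i) * ∏ j ∈ Finset.Ico d i, (1 - a j)) /
            ((d : ℝ) + 1 + ∑ i ∈ Finset.Ico d k, ∏ j ∈ Finset.Ico d (i + 1), (1 - a j))) ''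
        {a : ℕ → ℝ | ∀ i, a i ∈ Set.Icc (0 : ℝ) 1}) m)
    (hρ : ρ = (1 - ε) * m) :
    ∃ h : ℕ → ℝ,
      (∀ i < d, ρ + h i = h (i + 1)) ∧
      (∀ i, d ≤ i → i < k →
        IsGreatest
          ((fun a : ℝ => (1 - ε) * binEnt a + (1 - a) * h (i + 1) + a * h 0) ''
            Set.Icc (0 : ℝ) 1)
          (ρ + h i)) ∧
      ρ = h 0 - h k := by
  set V := valueIter (1 - ε) ρ
  have hV_d : V (k - d) = d * ρ := (isGreatest_valueIter _ ρ hdk.le).unique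
    (isGreatest_gain_of_isGreatest_ratio (sub_nonneg.2 hε.2) hm hρ)
  set h : ℕ → ℝ := fun i => if i ≤ d then i * ρ else V (k - i)
  have h_zero : h 0 = 0 := by simp [h]
  have h_eq_V : ∀ i, d ≤ i → h i = V (k - i) := fun i hi => by
    rcases hi.eq_or_lt with rfl | hi
    · simp [h, hV_d]
    · simp [h, hi.not_ge]
  refine ⟨h, fun i hi => ?_, fun i hdi hik => ?_, ?_⟩
  · simp only [h, if_pos hi.le, if_pos (Nat.succ_le_of_lt hi)]
    push_cast
    ring
  · rw [h_zero, h_eq_V i hdi, h_eq_V (i + 1) (by omega), show k - i = k - (i + 1) + 1 by omega]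
    simpa [V, valueIter] using isGreatest_bellmanMax (1 - ε) (V (k - (i + 1)))
  · rw [h_zero, h_eq_V k hdk.le, Nat.sub_self]
    simp [V, valueIter]
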